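/- Let σ_1, …, σ_p < 0, let c_1, …, c_p be real numbers all of the same sign, and set h(t) = (∑_{i=1}^p c_i/(t − σ_i))². Let A be an n×n Hermitian positive definite complex matrix with all eigenvalues contained in [a,b] where 0 < a, let v be a unit vector, and let (V_k, T̂_k, β_k, v_{k+1}) be a Lanczos relation of length k for A with starting vector v, with the eigenvalues of T̂_k lying in (a,b). Then the Gauss-rule estimate is a lower bound for v* h(A) v, i.e. e_1* h(T̂_k) e_1 ≤ v* h(A) v. -/

import Mathlib

/-!
Both sides are integrals against discrete measures: `v* h(A) v` against the spectral measure
`μ = ∑ wₗ δ_{λₗ}` of `A` at `v`, and `e₁* h(T̂ₖ) e₁` against the `k`-node Gauss rule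
`ν = ∑ ωⱼ δ_{θⱼ}`. The Lanczos relation gives `v* Aᵐ v = e₁* T̂ₖᵐ e₁` for `m < 2k`, so `μ` and
`ν` agree on polynomials of degree `< 2k`.

Let `g(t) = ∑ cᵢ/(t - σᵢ)` with `cᵢ ≥ 0` (after a change of sign) and let `P`, of degree `< k`,
interpolate `g` at the nodes. Dividing `P` by `t - σᵢ` gives
`g² = (g - P)² + q + 2 ∑ cᵢ P(σᵢ)/(t - σᵢ)` with `deg q < 2k`. The square vanishes at the nodes,
`q` is integrated exactly, and `cᵢ P(σᵢ) ≥ 0` since the poles lie left of all nodes. Finally `ν`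
underestimates `∫ dμ(t)/(t - σ)`: if `ℓ` is the nodal polynomial with `ℓ(σ) = 1`, then
`(1 - ℓ²)/(t - σ)` is a polynomial of degree `< 2k` that equals `1/(t - σ)` at the nodes and
lies below it for `t > σ`.
-/

open Matrix
open scoped ComplexOrder

/-- A Lanczos relation of length `k` for an `n × n` Hermitian matrix `A` over `𝕜`
with starting unit vector `v`: orthonormal columns `V` with first column `v`, a real
symmetric tridiagonal matrix `T` with positive subdiagonal, `β > 0` and a unit vector
`vNext` orthogonal to the columns of `V`, such that `A V = V T + β vNext eₖ*`. -/
structure LanczosRelation (𝕜 : Type) [RCLike 𝕜] (n k : ℕ)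
    (A : Matrix (Fin n) (Fin n) 𝕜) (v : Fin n → 𝕜) where
  kpos : 0 < k
  V : Matrix (Fin n) (Fin k) 𝕜
  T : Matrix (Fin k) (Fin k) ℝ
  β : ℝ
  vNext : Fin n → 𝕜
  orthonormal : Vᴴ * V = 1
  firstCol : (fun i => V i ⟨0, kpos⟩) = v
  symm : T.IsHermitian
  tridiag : ∀ i j : Fin k, (i : ℕ) + 1 < (j : ℕ) → T i j = 0
  subdiag_pos : ∀ (i : ℕ) (h : i + 1 < k), 0 < T ⟨i + 1, h⟩ ⟨i, by omega⟩
  β_pos : 0 < β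
  vNext_unit : star vNext ⬝ᵥ vNext = 1
  vNext_orth : Vᴴ *ᵥ vNext = 0
  relation : A * V = V * T.map (algebraMap ℝ 𝕜) +
      (algebraMap ℝ 𝕜 β) • vecMulVec vNext (Pi.single ⟨k - 1, by omega⟩ 1)

open Polynomial

namespace Polynomial

variable {R : Type*} [CommRing R]

lemma sub_mul_eval_divByMonic_X_sub_C (q : R[X]) (s t : R) :
    (t - s) * (q /ₘ (X - C s)).eval t = q.eval t - q.eval s := by
  have h := congrArg (eval t) (modByMonic_add_div q (X - C s))
  rw [modByMonic_X_sub_C_eq_C_eval] at h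
  simp only [eval_add, eval_C, eval_mul, eval_sub, eval_X] at h
  rw [← h]; ring

lemma natDegree_divByMonic_X_sub_C [Nontrivial R] (q : R[X]) (s : R) :
    (q /ₘ (X - C s)).natDegree = q.natDegree - 1 := by
  rw [natDegree_divByMonic _ (monic_X_sub_C s), natDegree_X_sub_C]

lemma eval_nonneg_of_forall_lt {q : ℝ[X]} {s : ℝ} (h : ∀ t < s, 0 ≤ q.eval t) :
    0 ≤ q.eval s := by
  have hclosed : IsClosed {t | 0 ≤ q.eval t} := isClosed_le continuous_const q.continuous
  have hsub : Set.Iio s ⊆ {t | 0 ≤ q.eval t} := h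
  exact hclosed.closure_subset_iff.2 hsub (by rw [closure_Iio]; exact Set.mem_Iic.2 le_rfl)

lemma sub_mul_eval_neg_divByMonic_X_sub_C {K : Type*} [Field K] {ℓ : K[X]} {s : K}
    (hs : ℓ.eval s = 1) (t : K) : (t - s) * (-(ℓ /ₘ (X - C s))).eval t = 1 - ℓ.eval t := by
  rw [eval_neg, mul_neg, sub_mul_eval_divByMonic_X_sub_C, hs, neg_sub]

lemma eval_neg_divByMonic_X_sub_C_of_eval_eq_zero {K : Type*} [Field K] {ℓ : K[X]} {s t : K}
    (hs : ℓ.eval s = 1) (ht : ℓ.eval t = 0) :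
    (-(ℓ /ₘ (X - C s))).eval t = (t - s)⁻¹ := by
  have h := sub_mul_eval_neg_divByMonic_X_sub_C hs t
  rw [ht, sub_zero] at h
  exact eq_inv_of_mul_eq_one_right h

lemma sq_sum_div_sub_eq {K : Type*} [Field K] {p : ℕ} (c σ : Fin p → K) (P : K[X]) {t : K}
    (ht : ∀ i, t ≠ σ i) :
    (∑ i, c i / (t - σ i)) ^ 2
      = (∑ i, c i / (t - σ i) - P.eval t) ^ 2
        + (∑ i, C (2 * c i) * (P /ₘ (X - C (σ i))) - P ^ 2).eval t
        + 2 * ∑ i, c i * P.eval (σ i) / (t - σ i) := by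
  have hmul : (∑ i, c i / (t - σ i)) * P.eval t
      = ∑ i, c i * (P /ₘ (X - C (σ i))).eval t + ∑ i, c i * P.eval (σ i) / (t - σ i) := by
    rw [Finset.sum_mul, ← Finset.sum_add_distrib]
    refine Finset.sum_congr rfl fun i _ => ?_
    have h := sub_mul_eval_divByMonic_X_sub_C P (σ i) t
    have hne : t - σ i ≠ 0 := sub_ne_zero.2 (ht i)
    field_simp
    linear_combination -(c i) * h
  simp only [eval_sub, eval_pow, eval_finsetSum, eval_mul, eval_C, mul_assoc, ← Finset.mul_sum]
  linear_combination 2 * hmul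

end Polynomial

section GaussQuadrature

variable {M N : ℕ} {w x : Fin N → ℝ} {ω θ : Fin M → ℝ} {a : ℝ}

noncomputable def normalizedNodal (θ : Fin M → ℝ) (s : ℝ) : ℝ[X] :=
  ∏ j, C (θ j - s)⁻¹ * (C (θ j) - X)

lemma eval_normalizedNodal (θ : Fin M → ℝ) (s t : ℝ) :
    (normalizedNodal θ s).eval t = ∏ j, (θ j - t) / (θ j - s) := by
  simp only [normalizedNodal, eval_prod, eval_mul, eval_C, eval_sub, eval_X]
  exact Finset.prod_congr rfl fun j _ => by ring

lemma eval_normalizedNodal_self {s : ℝ} (hs : ∀ j, θ j ≠ s) :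
    (normalizedNodal θ s).eval s = 1 := by
  rw [eval_normalizedNodal]
  exact Finset.prod_eq_one fun j _ => div_self (sub_ne_zero.2 (hs j))

lemma eval_normalizedNodal_node (s : ℝ) (j : Fin M) : (normalizedNodal θ s).eval (θ j) = 0 := by
  rw [eval_normalizedNodal]
  exact Finset.prod_eq_zero (Finset.mem_univ j) (by simp)

lemma natDegree_normalizedNodal_le (θ : Fin M → ℝ) (s : ℝ) :
    (normalizedNodal θ s).natDegree ≤ M := by
  refine (natDegree_prod_le _ _).trans ?_
  refine (Finset.sum_le_card_nsmul _ _ 1 fun j _ => ?_).trans (by simp)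
  exact (natDegree_C_mul_le _ _).trans ((natDegree_sub_le _ _).trans (by simp))

lemma one_le_eval_normalizedNodal {s t : ℝ} (hs : ∀ j, s < θ j) (ht : t ≤ s) :
    1 ≤ (normalizedNodal θ s).eval t := by
  rw [eval_normalizedNodal]
  refine Finset.one_le_prod fun j _ => ?_
  rw [one_le_div (sub_pos.2 (hs j))]; linarith

lemma eval_normalizedNodal_le_one {s t : ℝ} (hs : s ≤ t) (ht : ∀ j, t ≤ θ j) (hsθ : ∀ j, s < θ j) :
    (normalizedNodal θ s).eval t ≤ 1 := by
  rw [eval_normalizedNodal]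
  refine Finset.prod_le_one (fun j _ => ?_) fun j _ => ?_
  · exact div_nonneg (sub_nonneg.2 (ht j)) (sub_pos.2 (hsθ j)).le
  · rw [div_le_one (sub_pos.2 (hsθ j))]; linarith

lemma sum_mul_eval_eq_of_moments {d : ℕ}
    (hmom : ∀ m < d, ∑ l, w l * x l ^ m = ∑ j, ω j * θ j ^ m) {q : ℝ[X]} (hq : q.natDegree < d) :
    ∑ l, w l * q.eval (x l) = ∑ j, ω j * q.eval (θ j) := by
  simp only [eval_eq_sum_range' hq, Finset.mul_sum]
  rw [Finset.sum_comm, Finset.sum_comm (γ := Fin M)]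
  refine Finset.sum_congr rfl fun m hm => ?_
  have h := congrArg (q.coeff m * ·) (hmom m (Finset.mem_range.1 hm))
  simp only [Finset.mul_sum] at h
  convert h using 2 <;> ring

lemma sum_mul_inv_sub_le (hM : 0 < M)
    (hmom : ∀ m < 2 * M, ∑ l, w l * x l ^ m = ∑ j, ω j * θ j ^ m)
    (hw : ∀ l, 0 ≤ w l) {s : ℝ} (hs : s < a) (hx : ∀ l, a ≤ x l) (hθ : ∀ j, a ≤ θ j) :
    ∑ j, ω j * (θ j - s)⁻¹ ≤ ∑ l, w l * (x l - s)⁻¹ := by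
  set ℓ := normalizedNodal θ s
  have hℓs : (ℓ ^ 2).eval s = 1 := by
    rw [eval_pow, eval_normalizedNodal_self fun j => (hs.trans_le (hθ j)).ne', one_pow]
  set Q := -(ℓ ^ 2 /ₘ (X - C s))
  have hQdeg : Q.natDegree < 2 * M := by
    rw [natDegree_neg, natDegree_divByMonic_X_sub_C]
    have := (natDegree_pow_le (p := ℓ) (n := 2)).trans
      (Nat.mul_le_mul_left 2 (natDegree_normalizedNodal_le θ s))
    omega
  have hQθ : ∀ j, Q.eval (θ j) = (θ j - s)⁻¹ := fun j =>
    eval_neg_divByMonic_X_sub_C_of_eval_eq_zero hℓs (by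
      rw [eval_pow, eval_normalizedNodal_node, zero_pow two_ne_zero])
  have hQx : ∀ l, Q.eval (x l) ≤ (x l - s)⁻¹ := by
    intro l
    have hpos : 0 < x l - s := by linarith [hx l]
    rw [← one_div, le_div_iff₀' hpos, sub_mul_eval_neg_divByMonic_X_sub_C hℓs, eval_pow]
    linarith [sq_nonneg (ℓ.eval (x l))]
  calc ∑ j, ω j * (θ j - s)⁻¹ = ∑ j, ω j * Q.eval (θ j) := by simp only [hQθ]
    _ = ∑ l, w l * Q.eval (x l) := (sum_mul_eval_eq_of_moments hmom hQdeg).symm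
    _ ≤ ∑ l, w l * (x l - s)⁻¹ := by gcongr with l; exacts [hw l, hQx l]

lemma sum_mul_sum_div_sub_le {p : ℕ} (hM : 0 < M)
    (hmom : ∀ m < 2 * M, ∑ l, w l * x l ^ m = ∑ j, ω j * θ j ^ m)
    (hw : ∀ l, 0 ≤ w l) {σ d : Fin p → ℝ} (hσ : ∀ i, σ i < a) (hd : ∀ i, 0 ≤ d i)
    (hx : ∀ l, a ≤ x l) (hθ : ∀ j, a ≤ θ j) :
    ∑ j, ω j * ∑ i, d i / (θ j - σ i) ≤ ∑ l, w l * ∑ i, d i / (x l - σ i) := by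
  have hswap : ∀ {K : ℕ} (u y : Fin K → ℝ),
      ∑ k, u k * ∑ i, d i / (y k - σ i) = ∑ i, d i * ∑ k, u k * (y k - σ i)⁻¹ := by
    intro K u y
    simp only [Finset.mul_sum]
    rw [Finset.sum_comm]
    exact Finset.sum_congr rfl fun i _ => Finset.sum_congr rfl fun k _ => by ring
  rw [hswap, hswap]
  gcongr with i
  exacts [hd i, sum_mul_inv_sub_le hM hmom hw (hσ i) hx hθ]

lemma eval_neg_divByMonic_normalizedNodal_nonneg {s t : ℝ} (hs : s < a) (hθ : ∀ j, a ≤ θ j)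
    (ht : t ≤ a) : 0 ≤ (-(normalizedNodal θ s /ₘ (X - C s))).eval t := by
  have hsθ : ∀ j, s < θ j := fun j => hs.trans_le (hθ j)
  have hmul := sub_mul_eval_neg_divByMonic_X_sub_C
    (eval_normalizedNodal_self (s := s) fun j => (hsθ j).ne')
  have below : ∀ t < s, 0 ≤ (-(normalizedNodal θ s /ₘ (X - C s))).eval t := by
    intro t hts
    have := one_le_eval_normalizedNodal hsθ hts.le
    nlinarith [hmul t]
  rcases lt_trichotomy t s with hts | rfl | hts
  · exact below t hts
  · exact eval_nonneg_of_forall_lt below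
  · have := eval_normalizedNodal_le_one hts.le (fun j => ht.trans (hθ j)) hsθ
    nlinarith [hmul t]

lemma exists_interpolant_sum_div_sub {p : ℕ} {σ c : Fin p → ℝ} (hσ : ∀ i, σ i < a)
    (hθ : ∀ j, a ≤ θ j) (hc : ∀ i, 0 ≤ c i) :
    ∃ P : ℝ[X], P.natDegree ≤ M - 1 ∧ (∀ j, P.eval (θ j) = ∑ i, c i / (θ j - σ i)) ∧
      ∀ i, 0 ≤ P.eval (σ i) := by
  refine ⟨∑ i, C (c i) * -(normalizedNodal θ (σ i) /ₘ (X - C (σ i))), ?_, fun j => ?_,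
    fun i' => ?_⟩
  · refine natDegree_sum_le_of_forall_le _ _ fun i _ => (natDegree_C_mul_le _ _).trans ?_
    rw [natDegree_neg, natDegree_divByMonic_X_sub_C]
    exact Nat.sub_le_sub_right (natDegree_normalizedNodal_le θ (σ i)) 1
  · simp only [eval_finsetSum, eval_mul, eval_C]
    refine Finset.sum_congr rfl fun i _ => ?_
    rw [eval_neg_divByMonic_X_sub_C_of_eval_eq_zero
      (eval_normalizedNodal_self fun j => ((hσ i).trans_le (hθ j)).ne')
        (eval_normalizedNodal_node _ j),
      div_eq_mul_inv]
  · simp only [eval_finsetSum, eval_mul, eval_C]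
    exact Finset.sum_nonneg fun i _ =>
      mul_nonneg (hc i) (eval_neg_divByMonic_normalizedNodal_nonneg (hσ i) hθ (hσ i').le)

theorem sum_mul_sq_sum_div_sub_le {p : ℕ} (hM : 0 < M)
    (hmom : ∀ m < 2 * M, ∑ l, w l * x l ^ m = ∑ j, ω j * θ j ^ m)
    (hw : ∀ l, 0 ≤ w l) {σ c : Fin p → ℝ} (hσ : ∀ i, σ i < a) (hc : ∀ i, 0 ≤ c i)
    (hx : ∀ l, a ≤ x l) (hθ : ∀ j, a ≤ θ j) :
    ∑ j, ω j * (∑ i, c i / (θ j - σ i)) ^ 2 ≤ ∑ l, w l * (∑ i, c i / (x l - σ i)) ^ 2 := by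
  obtain ⟨P, hPdeg, hPθ, hPσ⟩ := exists_interpolant_sum_div_sub hσ hθ hc
  set q := ∑ i, C (2 * c i) * (P /ₘ (X - C (σ i))) - P ^ 2
  have hq : q.natDegree < 2 * M := by
    refine (natDegree_sub_le _ _).trans_lt (max_lt ?_ ?_)
    · refine (natDegree_sum_le_of_forall_le _ _ fun i _ => (natDegree_C_mul_le _ _).trans
        (natDegree_divByMonic_X_sub_C P (σ i)).le).trans_lt ?_
      omega
    · have := natDegree_pow_le (p := P) (n := 2)
      omega
  set d := fun i => c i * P.eval (σ i)
  have hxσ : ∀ l i, x l ≠ σ i := fun l i => ((hσ i).trans_le (hx l)).ne'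
  have hθσ : ∀ j i, θ j ≠ σ i := fun j i => ((hσ i).trans_le (hθ j)).ne'
  calc ∑ j, ω j * (∑ i, c i / (θ j - σ i)) ^ 2
      = ∑ j, ω j * q.eval (θ j) + 2 * ∑ j, ω j * ∑ i, d i / (θ j - σ i) := by
        rw [Finset.mul_sum, ← Finset.sum_add_distrib]
        refine Finset.sum_congr rfl fun j _ => ?_
        rw [sq_sum_div_sub_eq c σ P (hθσ j), hPθ j]
        ring
    _ ≤ ∑ l, w l * q.eval (x l) + 2 * ∑ l, w l * ∑ i, d i / (x l - σ i) := by
        rw [sum_mul_eval_eq_of_moments hmom hq]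
        gcongr
        exact sum_mul_sum_div_sub_le hM hmom hw hσ (fun i => mul_nonneg (hc i) (hPσ i)) hx hθ
    _ ≤ ∑ l, w l * (∑ i, c i / (x l - σ i)) ^ 2 := by
        rw [Finset.mul_sum, ← Finset.sum_add_distrib]
        gcongr with l
        rw [sq_sum_div_sub_eq c σ P (hxσ l)]
        nlinarith [mul_nonneg (hw l) (sq_nonneg (∑ i, c i / (x l - σ i) - P.eval (x l)))]

theorem sum_mul_sq_sum_div_sub_le_of_sameSign {p : ℕ} (hM : 0 < M)
    (hmom : ∀ m < 2 * M, ∑ l, w l * x l ^ m = ∑ j, ω j * θ j ^ m)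
    (hw : ∀ l, 0 ≤ w l) {σ c : Fin p → ℝ} (hσ : ∀ i, σ i < a)
    (hc : (∀ i, 0 ≤ c i) ∨ (∀ i, c i ≤ 0)) (hx : ∀ l, a ≤ x l) (hθ : ∀ j, a ≤ θ j) :
    ∑ j, ω j * (∑ i, c i / (θ j - σ i)) ^ 2 ≤ ∑ l, w l * (∑ i, c i / (x l - σ i)) ^ 2 := by
  rcases hc with hc | hc
  · exact sum_mul_sq_sum_div_sub_le hM hmom hw hσ hc hx hθ
  · simpa [neg_div, Finset.sum_neg_distrib, neg_sq] using
      sum_mul_sq_sum_div_sub_le hM hmom hw hσ (c := -c) (fun i => neg_nonneg.2 (hc i)) hx hθ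

end GaussQuadrature

namespace Matrix.IsHermitian

variable {𝕜 n : Type*} [RCLike 𝕜] [Fintype n] [DecidableEq n] {A : Matrix n n 𝕜}

noncomputable def spectralWeight (hA : A.IsHermitian) (x : n → 𝕜) (j : n) : ℝ :=
  ‖(star (hA.eigenvectorUnitary : Matrix n n 𝕜) *ᵥ x) j‖ ^ 2

lemma spectralWeight_nonneg (hA : A.IsHermitian) (x : n → 𝕜) (j : n) :
    0 ≤ hA.spectralWeight x j :=
  sq_nonneg _

lemma dotProduct_cfc_mulVec (hA : A.IsHermitian) (f : ℝ → ℝ) (x : n → 𝕜) :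
    star x ⬝ᵥ hA.cfc f *ᵥ x = ((∑ j, hA.spectralWeight x j * f (hA.eigenvalues j) : ℝ) : 𝕜) := by
  set U : Matrix n n 𝕜 := ↑hA.eigenvectorUnitary
  rw [IsHermitian.cfc, Unitary.conjStarAlgAut_apply, ← mulVec_mulVec, ← mulVec_mulVec,
    dotProduct_mulVec]
  have : star x ᵥ* U = star (star U *ᵥ x) := by
    rw [star_mulVec, star_eq_conjTranspose, conjTranspose_conjTranspose]
  rw [this, dotProduct, RCLike.ofReal_sum]
  refine Finset.sum_congr rfl fun j _ => ?_
  rw [mulVec_diagonal, spectralWeight, Pi.star_apply, RCLike.star_def, Function.comp_apply,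
    Function.comp_apply, mul_left_comm, RCLike.conj_mul]
  push_cast
  ring

lemma dotProduct_pow_mulVec (hA : A.IsHermitian) (m : ℕ) (x : n → 𝕜) :
    star x ⬝ᵥ (A ^ m) *ᵥ x = ((∑ j, hA.spectralWeight x j * hA.eigenvalues j ^ m : ℝ) : 𝕜) := by
  rw [← cfc_pow_id (R := ℝ) A m hA.isSelfAdjoint, hA.cfc_eq, dotProduct_cfc_mulVec]

end Matrix.IsHermitian

namespace LanczosRelation

variable {𝕜 : Type} [RCLike 𝕜] {n k : ℕ} {A : Matrix (Fin n) (Fin n) 𝕜} {v : Fin n → 𝕜}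
  (L : LanczosRelation 𝕜 n k A v)

def e₀ : Fin k := ⟨0, L.kpos⟩

lemma T_eq_zero_of_add_one_lt {i j : Fin k} (h : (j : ℕ) + 1 < i) : L.T i j = 0 := by
  rw [← L.symm.apply i j, L.tridiag j i h, star_zero]

lemma T_pow_apply_e₀_eq_zero {m : ℕ} {i : Fin k} (h : m < i) : (L.T ^ m) i L.e₀ = 0 := by
  induction m generalizing i with
  | zero => simp [one_apply, e₀, Fin.ext_iff, h.ne']
  | succ m ih =>
    rw [pow_succ', mul_apply]
    refine Finset.sum_eq_zero fun j _ => ?_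
    rcases lt_or_ge m j with hj | hj
    · rw [ih hj, mul_zero]
    · rw [L.T_eq_zero_of_add_one_lt (by omega), zero_mul]

noncomputable def krylovCoord (m : ℕ) : Fin k → 𝕜 := fun i => algebraMap ℝ 𝕜 ((L.T ^ m) i L.e₀)

lemma mulVec_krylovCoord (m : ℕ) :
    L.T.map (algebraMap ℝ 𝕜) *ᵥ L.krylovCoord m = L.krylovCoord (m + 1) := by
  ext i
  simp only [krylovCoord, mulVec, dotProduct, map_apply, pow_succ', mul_apply, map_sum, map_mul]

lemma mulVec_V_mulVec (y : Fin k → 𝕜) :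
    A *ᵥ (L.V *ᵥ y) = L.V *ᵥ (L.T.map (algebraMap ℝ 𝕜) *ᵥ y)
      + (algebraMap ℝ 𝕜 L.β * y ⟨k - 1, by have := L.kpos; omega⟩) • L.vNext := by
  rw [mulVec_mulVec, L.relation, add_mulVec, ← mulVec_mulVec, smul_mulVec, mul_smul]
  congr 2
  ext i
  simp [vecMulVec_apply, mulVec, dotProduct, Pi.single_apply, mul_comm]

lemma pow_mulVec_eq_V_mulVec {m : ℕ} (hm : m < k) : A ^ m *ᵥ v = L.V *ᵥ L.krylovCoord m := by
  induction m with
  | zero =>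
    ext i
    simp [krylovCoord, mulVec, dotProduct, one_apply, ← L.firstCol, e₀]
  | succ m ih =>
    have hlast : L.krylovCoord m ⟨k - 1, by omega⟩ = 0 := by
      rw [krylovCoord, L.T_pow_apply_e₀_eq_zero (by simp; omega), map_zero]
    rw [pow_succ', ← mulVec_mulVec, ih (by omega), mulVec_V_mulVec, hlast, mul_zero, zero_smul,
      add_zero, mulVec_krylovCoord]

lemma exists_pow_mulVec_eq {m : ℕ} (hm : m ≤ k) :
    ∃ γ : 𝕜, A ^ m *ᵥ v = L.V *ᵥ L.krylovCoord m + γ • L.vNext := by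
  rcases hm.lt_or_eq with hm | rfl
  · exact ⟨0, by rw [zero_smul, add_zero, L.pow_mulVec_eq_V_mulVec hm]⟩
  · obtain ⟨j, rfl⟩ : ∃ j, j + 1 = m := ⟨m - 1, by have := L.kpos; omega⟩
    rw [pow_succ', ← mulVec_mulVec, L.pow_mulVec_eq_V_mulVec (by omega), mulVec_V_mulVec,
      mulVec_krylovCoord]
    exact ⟨_, rfl⟩

lemma star_V_mulVec_dotProduct (y z : Fin k → 𝕜) (γ : 𝕜) :
    star (L.V *ᵥ y) ⬝ᵥ (L.V *ᵥ z + γ • L.vNext) = star y ⬝ᵥ z := by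
  rw [star_mulVec, dotProduct_add, dotProduct_smul, ← dotProduct_mulVec, ← dotProduct_mulVec,
    mulVec_mulVec, L.orthonormal, L.vNext_orth, one_mulVec, dotProduct_zero, smul_zero, add_zero]

lemma star_krylovCoord_dotProduct (r s : ℕ) :
    star (L.krylovCoord r) ⬝ᵥ L.krylovCoord s = algebraMap ℝ 𝕜 ((L.T ^ (r + s)) L.e₀ L.e₀) := by
  simp only [krylovCoord, dotProduct, Pi.star_apply, pow_add, mul_apply, map_sum, map_mul]
  refine Finset.sum_congr rfl fun i _ => ?_
  rw [RCLike.star_def, RCLike.algebraMap_eq_ofReal, RCLike.conj_ofReal,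
    ← (L.symm.pow r).apply L.e₀ i, star_trivial]

lemma dotProduct_pow_mulVec (hA : A.IsHermitian) {m : ℕ} (hm : m < 2 * k) :
    star v ⬝ᵥ A ^ m *ᵥ v = algebraMap ℝ 𝕜 ((L.T ^ m) L.e₀ L.e₀) := by
  obtain ⟨r, s, rfl, hr, hs⟩ : ∃ r s, m = r + s ∧ r < k ∧ s ≤ k :=
    ⟨min m (k - 1), m - min m (k - 1), by omega, by omega, by omega⟩
  obtain ⟨γ, hγ⟩ := L.exists_pow_mulVec_eq hs
  rw [pow_add, ← mulVec_mulVec, dotProduct_mulVec, ← (hA.pow r).eq, ← star_mulVec,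
    L.pow_mulVec_eq_V_mulVec hr, hγ, star_V_mulVec_dotProduct, star_krylovCoord_dotProduct]

lemma sum_spectralWeight_mul_pow_eq (hA : A.IsHermitian) {m : ℕ} (hm : m < 2 * k) :
    ∑ l, hA.spectralWeight v l * hA.eigenvalues l ^ m
      = ∑ j, L.symm.spectralWeight (Pi.single L.e₀ 1) j * L.symm.eigenvalues j ^ m := by
  have hT := L.symm.dotProduct_pow_mulVec m (Pi.single L.e₀ 1)
  rw [star_trivial, single_dotProduct, one_mul, mulVec_single_one, RCLike.ofReal_real_eq_id,
    id] at hT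
  have h := hA.dotProduct_pow_mulVec m v
  rw [L.dotProduct_pow_mulVec hA hm, RCLike.algebraMap_eq_ofReal, RCLike.ofReal_inj] at h
  rw [← h]
  exact hT

end LanczosRelation

theorem gauss_rule_lower_bound_general
    {p n k : ℕ} (σ c : Fin p → ℝ) (hσ : ∀ i, σ i < 0)
    (hc : (∀ i, 0 ≤ c i) ∨ (∀ i, c i ≤ 0))
    {a b : ℝ} (ha : 0 < a)
    {A : Matrix (Fin n) (Fin n) ℂ} (hA : A.IsHermitian)
    (hspec : ∀ i, hA.eigenvalues i ∈ Set.Icc a b)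
    {v : Fin n → ℂ}
    (L : LanczosRelation ℂ n k A v)
    (ht : ∀ j, L.symm.eigenvalues j ∈ Set.Ioo a b) :
    (Pi.single (⟨0, L.kpos⟩ : Fin k) 1 ⬝ᵥ
        (L.symm.cfc fun t => (∑ i, c i / (t - σ i)) ^ 2) *ᵥ
        Pi.single (⟨0, L.kpos⟩ : Fin k) 1 : ℝ)
      ≤ Complex.re (star v ⬝ᵥ (hA.cfc fun t => (∑ i, c i / (t - σ i)) ^ 2) *ᵥ v) := by
  have lhs := L.symm.dotProduct_cfc_mulVec (fun t => (∑ i, c i / (t - σ i)) ^ 2)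
    (Pi.single L.e₀ 1)
  rw [star_trivial, RCLike.ofReal_real_eq_id, id] at lhs
  rw [hA.dotProduct_cfc_mulVec]
  refine lhs.trans_le (le_of_le_of_eq ?_ (Complex.ofReal_re _).symm)
  exact sum_mul_sq_sum_div_sub_le_of_sameSign L.kpos
    (fun m hm => L.sum_spectralWeight_mul_pow_eq hA hm) (hA.spectralWeight_nonneg v)
    (fun i => (hσ i).trans ha) hc (fun l => (hspec l).1) (fun j => (ht j).1.le)

/-- **The Gauss rule estimate is a lower bound** for `v* h(A) v` when
`h(t) = (∑ᵢ cᵢ/(t - σᵢ))²` with all poles `σᵢ < 0` and coefficients `cᵢ` of one sign,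
and `A` is Hermitian positive definite with spectrum in `[a,b] ⊆ (0,∞)`. -/
theorem gauss_rule_lower_bound
    {p n k : ℕ} (σ c : Fin p → ℝ) (hσ : ∀ i, σ i < 0)
    (hc : (∀ i, 0 ≤ c i) ∨ (∀ i, c i ≤ 0))
    {a b : ℝ} (ha : 0 < a)
    {A : Matrix (Fin n) (Fin n) ℂ} (hA : A.IsHermitian) (hApd : A.PosDef)
    (hspec : ∀ i, hA.eigenvalues i ∈ Set.Icc a b)
    {v : Fin n → ℂ} (hv : star v ⬝ᵥ v = 1)
    (L : LanczosRelation ℂ n k A v)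
    (ht : ∀ j, L.symm.eigenvalues j ∈ Set.Ioo a b) :
    (Pi.single (⟨0, L.kpos⟩ : Fin k) 1 ⬝ᵥ
        (L.symm.cfc fun t => (∑ i, c i / (t - σ i)) ^ 2) *ᵥ
        Pi.single (⟨0, L.kpos⟩ : Fin k) 1 : ℝ)
      ≤ Complex.re (star v ⬝ᵥ (hA.cfc fun t => (∑ i, c i / (t - σ i)) ^ 2) *ᵥ v) :=
  gauss_rule_lower_bound_general σ c hσ hc ha hA hspec L ht
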